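/- arXiv:1006.1749 — 2 statements merged into one kernel-verified Lean document; each statement's English description precedes it below -/
import Mathlib

section
/- Let X be a Banach space and {T_σ} a switched evolution family that is globally uniformly exponentially stable: ‖T_σ(t)‖ ≤ K e^{−μt} uniformly in σ. Define V(x) = sup_σ ∫₀^∞ ‖T_σ(t)x‖² dt. Then V is convex, positively homogeneous of degree 2, positive definite, and continuous on X; consequently √V is a norm on X. -/
open MeasureTheory Real Filter Set Topology

/-- A strongly continuous semigroup of bounded linear operators on `X`. -/
structure C0Semigroup (X : Type*) [NormedAddCommGroup X] [NormedSpace ℝ X] where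
  T : ℝ → X →L[ℝ] X
  map_zero : T 0 = ContinuousLinearMap.id ℝ X
  map_add : ∀ s t : ℝ, 0 ≤ s → 0 ≤ t → T (s + t) = (T s).comp (T t)
  strong_cont : ∀ x : X, ContinuousOn (fun t => T t x) (Set.Ici 0)

/-- A switched evolution family generated by strongly continuous semigroups indexed by the
set of modes `Q`, with `Sig` the (abstract) class of piecewise constant switching signals and
`T σ t` the evolution operator along the signal `σ` at time `t`. -/
structure SwitchedSystem (Q X : Type*) [NormedAddCommGroup X] [NormedSpace ℝ X] where
  mode : Q → C0Semigroup X
  Sig : Type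
  T : Sig → ℝ → X →L[ℝ] X
  T_zero : ∀ σ, T σ 0 = ContinuousLinearMap.id ℝ X
  strong_cont : ∀ σ x, ContinuousOn (fun t => T σ t x) (Set.Ici 0)
  /-- constant switching signals -/
  const : Q → Sig
  T_const : ∀ j t, T (const j) t = (mode j).T t
  /-- concatenation property: `T σ (t+s) = T σₛ t ∘ T σ s` for some shifted signal `σₛ` -/
  shift : ∀ (σ : Sig) (s : ℝ), 0 ≤ s → ∃ σ' : Sig, ∀ t, 0 ≤ t →
    T σ (t + s) = (T σ' t).comp (T σ s)
  /-- the class of signals is closed under prepending a mode for a given duration -/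
  prepend : ∀ (j : Q) (σ : Sig) (s : ℝ), 0 ≤ s → ∃ σ' : Sig,
    (∀ t, 0 ≤ t → t ≤ s → T σ' t = (mode j).T t) ∧
    (∀ t, 0 ≤ t → T σ' (t + s) = (T σ t).comp ((mode j).T s))

/-!
For each signal `σ`, the map `x ↦ ‖t ↦ T_σ(t) x‖_{L²(0,∞)}` is a seminorm on `X` (Minkowski's
inequality in `L²`), and exponential decay bounds it by `√(K² / 2μ) ‖x‖` uniformly in `σ`.
Hence `√V` is the supremum of a bounded family of seminorms, itself a seminorm dominated by a
multiple of the norm, so it is continuous, and `V = (√V)²` is convex and homogeneous of degree 2.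
If `V x = 0`, the orbit of `x` along a constant signal vanishes a.e. on `(0, ∞)`, hence everywhere
by strong continuity, and at `t = 0` it is `x` itself.
-/

section L2

variable {α E X Y ι : Type*} [MeasurableSpace α] {ν : Measure α} [NormedAddCommGroup E]
  [NormedAddCommGroup X] [NormedSpace ℝ X] [NormedAddCommGroup Y] [NormedSpace ℝ Y]

lemma lpNorm_two_eq_sqrt_integral {f : α → E} (hf : AEStronglyMeasurable f ν) :
    lpNorm f 2 ν = √(∫ a, ‖f a‖ ^ 2 ∂ν) := by
  rw [lpNorm_eq_integral_norm_rpow_toReal two_ne_zero ENNReal.ofNat_ne_top hf, sqrt_eq_rpow]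
  norm_num

noncomputable def orbitL2Seminorm (ν : Measure α) (T : α → X →L[ℝ] Y)
    (hT : ∀ x, MemLp (fun a ↦ T a x) 2 ν) : Seminorm ℝ X :=
  Seminorm.of (fun x ↦ lpNorm (fun a ↦ T a x) 2 ν)
    (fun x y ↦ by simp only [map_add]; exact lpNorm_add_le (hT x) one_le_two)
    (fun c x ↦ by simp only [map_smul]; exact lpNorm_const_smul c (fun a ↦ T a x) ν)

lemma orbitL2Seminorm_apply {T : α → X →L[ℝ] Y} (hT : ∀ x, MemLp (fun a ↦ T a x) 2 ν) (x : X) :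
    orbitL2Seminorm ν T hT x = √(∫ a, ‖T a x‖ ^ 2 ∂ν) :=
  lpNorm_two_eq_sqrt_integral (hT x).1

lemma orbitL2Seminorm_le {T : α → X →L[ℝ] Y} (hT : ∀ x, MemLp (fun a ↦ T a x) 2 ν) {C : ℝ}
    {x : X} (hC : ∫ a, ‖T a x‖ ^ 2 ∂ν ≤ C * ‖x‖ ^ 2) :
    orbitL2Seminorm ν T hT x ≤ √C * ‖x‖ := by
  rw [orbitL2Seminorm_apply, ← sqrt_sq (norm_nonneg x), ← sqrt_mul' _ (sq_nonneg _)]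
  exact sqrt_le_sqrt hC

variable {T : ι → α → X →L[ℝ] Y} (hT : ∀ i x, MemLp (fun a ↦ T i a x) 2 ν) {C : ℝ}

lemma bddAbove_range_orbitL2Seminorm (hC : ∀ i x, ∫ a, ‖T i a x‖ ^ 2 ∂ν ≤ C * ‖x‖ ^ 2) :
    BddAbove (range fun i ↦ orbitL2Seminorm ν (T i) (hT i)) :=
  Seminorm.bddAbove_range_iff.mpr fun x ↦
    ⟨√C * ‖x‖, forall_mem_range.mpr fun i ↦ orbitL2Seminorm_le (hT i) (hC i x)⟩

lemma orbitL2Seminorm_le_iSup (hC : ∀ i x, ∫ a, ‖T i a x‖ ^ 2 ∂ν ≤ C * ‖x‖ ^ 2) (i : ι) :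
    orbitL2Seminorm ν (T i) (hT i) ≤ ⨆ i, orbitL2Seminorm ν (T i) (hT i) :=
  le_ciSup (bddAbove_range_orbitL2Seminorm hT hC) i

lemma sqrt_iSup_integral_norm_sq_eq [Nonempty ι]
    (hC : ∀ i x, ∫ a, ‖T i a x‖ ^ 2 ∂ν ≤ C * ‖x‖ ^ 2) (x : X) :
    √(⨆ i, ∫ a, ‖T i a x‖ ^ 2 ∂ν) = (⨆ i, orbitL2Seminorm ν (T i) (hT i)) x := by
  have hbdd : BddAbove (range fun i ↦ ∫ a, ‖T i a x‖ ^ 2 ∂ν) :=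
    ⟨C * ‖x‖ ^ 2, forall_mem_range.mpr fun i ↦ hC i x⟩
  rw [Seminorm.iSup_apply (bddAbove_range_orbitL2Seminorm hT hC),
    Monotone.map_ciSup_of_continuousAt continuous_sqrt.continuousAt sqrt_monotone hbdd]
  simp only [orbitL2Seminorm_apply]

lemma continuous_iSup_orbitL2Seminorm [Nonempty ι]
    (hC : ∀ i x, ∫ a, ‖T i a x‖ ^ 2 ∂ν ≤ C * ‖x‖ ^ 2) :
    Continuous (⨆ i, orbitL2Seminorm ν (T i) (hT i) : Seminorm ℝ X) := by
  refine Seminorm.continuous_of_le (q := (√C).toNNReal • normSeminorm ℝ X)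
    (continuous_const.mul continuous_norm) (ciSup_le fun i x ↦ ?_)
  rw [smul_apply, coe_normSeminorm, NNReal.smul_def, coe_toNNReal _ (sqrt_nonneg C),
    smul_eq_mul]
  exact orbitL2Seminorm_le (hT i) (hC i x)

end L2

section ExponentialDecay

variable {X Y : Type*} [NormedAddCommGroup X] [NormedSpace ℝ X] [NormedAddCommGroup Y]
  [NormedSpace ℝ Y] {T : ℝ → X →L[ℝ] Y} {K μ : ℝ}

lemma norm_apply_sq_le_of_decay (hT : ∀ t, 0 ≤ t → ‖T t‖ ≤ K * exp (-μ * t)) {t : ℝ}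
    (ht : 0 ≤ t) (x : X) : ‖T t x‖ ^ 2 ≤ K ^ 2 * ‖x‖ ^ 2 * exp (-(2 * μ) * t) := by
  have hexp : exp (-(2 * μ) * t) = exp (-μ * t) ^ 2 := by rw [← exp_nat_mul]; ring_nf
  calc ‖T t x‖ ^ 2 ≤ (K * exp (-μ * t) * ‖x‖) ^ 2 := by
        gcongr
        exact (T t).le_of_opNorm_le (hT t ht) x
    _ = K ^ 2 * ‖x‖ ^ 2 * exp (-(2 * μ) * t) := by rw [hexp]; ring

lemma integrableOn_norm_apply_sq_of_decay (hμ : 0 < μ)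
    (hT : ∀ t, 0 ≤ t → ‖T t‖ ≤ K * exp (-μ * t)) {x : X}
    (hx : ContinuousOn (fun t ↦ T t x) (Ioi 0)) :
    IntegrableOn (fun t ↦ ‖T t x‖ ^ 2) (Ioi 0) := by
  refine ((exp_neg_integrableOn_Ioi 0 (by positivity : 0 < 2 * μ)).const_mul (K ^ 2 * ‖x‖ ^ 2)
    |>.mono' ((hx.norm.pow 2).aestronglyMeasurable measurableSet_Ioi) ?_)
  filter_upwards [ae_restrict_mem measurableSet_Ioi] with t ht
  rw [norm_pow, norm_norm]
  exact norm_apply_sq_le_of_decay hT (le_of_lt ht) x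

lemma memLp_two_of_decay (hμ : 0 < μ) (hT : ∀ t, 0 ≤ t → ‖T t‖ ≤ K * exp (-μ * t)) {x : X}
    (hx : ContinuousOn (fun t ↦ T t x) (Ioi 0)) :
    MemLp (fun t ↦ T t x) 2 (volume.restrict (Ioi 0)) :=
  (memLp_two_iff_integrable_sq_norm (hx.aestronglyMeasurable measurableSet_Ioi)).mpr
    (integrableOn_norm_apply_sq_of_decay hμ hT hx)

lemma integral_norm_apply_sq_le_of_decay (hμ : 0 < μ)
    (hT : ∀ t, 0 ≤ t → ‖T t‖ ≤ K * exp (-μ * t)) {x : X}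
    (hx : ContinuousOn (fun t ↦ T t x) (Ioi 0)) :
    ∫ t in Ioi 0, ‖T t x‖ ^ 2 ≤ K ^ 2 / (2 * μ) * ‖x‖ ^ 2 := by
  have hexp : ∫ t in Ioi (0 : ℝ), exp (-(2 * μ) * t) = 1 / (2 * μ) := by
    rw [integral_exp_mul_Ioi (by linarith)]
    simp
  calc ∫ t in Ioi 0, ‖T t x‖ ^ 2 ≤ ∫ t in Ioi 0, K ^ 2 * ‖x‖ ^ 2 * exp (-(2 * μ) * t) :=
        setIntegral_mono_on (integrableOn_norm_apply_sq_of_decay hμ hT hx)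
          ((exp_neg_integrableOn_Ioi 0 (by positivity : 0 < 2 * μ)).const_mul _) measurableSet_Ioi
          fun t ht ↦ norm_apply_sq_le_of_decay hT (le_of_lt ht) x
    _ = K ^ 2 / (2 * μ) * ‖x‖ ^ 2 := by rw [integral_const_mul, hexp]; ring

lemma apply_zero_eq_zero_of_orbitL2Seminorm_eq_zero
    (hT : ∀ x, MemLp (fun t ↦ T t x) 2 (volume.restrict (Ioi 0)))
    {x : X} (hx : ContinuousOn (fun t ↦ T t x) (Ici 0))
    (h : orbitL2Seminorm (volume.restrict (Ioi 0)) T hT x = 0) : T 0 x = 0 := by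
  have hae : (fun t ↦ T t x) =ᵐ[volume.restrict (Ioi 0)] 0 :=
    (lpNorm_eq_zero (hT x) two_ne_zero).mp h
  have hIoi : EqOn (fun t ↦ T t x) 0 (Ioi 0) :=
    Measure.eqOn_open_of_ae_eq hae isOpen_Ioi (hx.mono Ioi_subset_Ici_self) continuousOn_const
  exact hIoi.of_subset_closure hx continuousOn_const Ioi_subset_Ici_self (closure_Ioi 0).ge
    self_mem_Ici

end ExponentialDecay

theorem stmt6_general {X : Type*} [NormedAddCommGroup X] [NormedSpace ℝ X]
    {Q : Type*} [Nonempty Q] (S : SwitchedSystem Q X)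
    (K μ : ℝ) (hμ : 0 < μ)
    (hdecay : ∀ (σ : S.Sig) (t : ℝ), 0 ≤ t → ‖S.T σ t‖ ≤ K * Real.exp (-μ * t))
    (V : X → ℝ)
    (hVdef : ∀ x, V x = ⨆ σ : S.Sig, ∫ t in Set.Ioi (0:ℝ), ‖S.T σ t x‖ ^ 2) :
    (∀ x, 0 ≤ V x) ∧
    ConvexOn ℝ Set.univ V ∧
    (∀ (a : ℝ) (x : X), 0 ≤ a → V (a • x) = a ^ 2 * V x) ∧
    (∀ x, V x = 0 ↔ x = 0) ∧
    Continuous V ∧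
    (∀ x y : X, Real.sqrt (V (x + y)) ≤ Real.sqrt (V x) + Real.sqrt (V y)) ∧
    (∀ (a : ℝ) (x : X), Real.sqrt (V (a • x)) = |a| * Real.sqrt (V x)) := by
  let σ₀ := S.const (Classical.arbitrary Q)
  have : Nonempty S.Sig := ⟨σ₀⟩
  have hcont σ x : ContinuousOn (fun t ↦ S.T σ t x) (Ioi 0) :=
    (S.strong_cont σ x).mono Ioi_subset_Ici_self
  have hmem σ x := memLp_two_of_decay hμ (hdecay σ) (hcont σ x)
  have hC σ x := integral_norm_apply_sq_le_of_decay hμ (hdecay σ) (hcont σ x)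
  set W := ⨆ σ, orbitL2Seminorm (volume.restrict (Ioi 0)) (S.T σ) (hmem σ)
  have hW x : √(V x) = W x := hVdef x ▸ sqrt_iSup_integral_norm_sq_eq hmem hC x
  have hV : V = (⇑W) ^ 2 := funext fun x ↦ by
    rw [Pi.pow_apply, ← hW, sq_sqrt (hVdef x ▸ iSup_nonneg fun σ ↦ by positivity)]
  refine ⟨fun x ↦ hV ▸ sq_nonneg (W x), hV ▸ W.convexOn.pow (fun x _ ↦ apply_nonneg W x) 2,
    fun a x _ ↦ ?_, fun x ↦ ⟨fun h ↦ ?_, ?_⟩, hV ▸ (continuous_iSup_orbitL2Seminorm hmem hC).pow 2,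
    fun x y ↦ ?_, fun a x ↦ ?_⟩
  · simp only [hV, Pi.pow_apply, map_smul_eq_mul, norm_eq_abs, mul_pow, sq_abs]
  · have hWx : W x = 0 := (pow_eq_zero_iff two_ne_zero).mp (by simpa [hV] using h)
    have hσ₀ : orbitL2Seminorm _ (S.T σ₀) (hmem σ₀) x = 0 :=
      le_antisymm ((orbitL2Seminorm_le_iSup hmem hC σ₀ x).trans_eq hWx) (apply_nonneg _ x)
    simpa [S.T_zero] using apply_zero_eq_zero_of_orbitL2Seminorm_eq_zero (hmem σ₀)
      (S.strong_cont σ₀ x) hσ₀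
  · rintro rfl
    simp [hV]
  · simpa only [hW] using map_add_le_add W x y
  · rw [hW, hW, map_smul_eq_mul, norm_eq_abs]

/-- For a globally uniformly exponentially stable switched system, the Lyapunov function
`V(x) = sup_σ ∫₀^∞ ‖T_σ(t)x‖² dt` is nonnegative, convex, positively homogeneous of degree 2,
positive definite and continuous; consequently `√V` is a norm on `X`. -/
theorem stmt6 {X : Type*} [NormedAddCommGroup X] [NormedSpace ℝ X] [CompleteSpace X]
    {Q : Type*} [Nonempty Q] (S : SwitchedSystem Q X)
    (K μ : ℝ) (hK : 1 ≤ K) (hμ : 0 < μ)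
    (hdecay : ∀ (σ : S.Sig) (t : ℝ), 0 ≤ t → ‖S.T σ t‖ ≤ K * Real.exp (-μ * t))
    (V : X → ℝ)
    (hVdef : ∀ x, V x = ⨆ σ : S.Sig, ∫ t in Set.Ioi (0:ℝ), ‖S.T σ t x‖ ^ 2) :
    (∀ x, 0 ≤ V x) ∧
    ConvexOn ℝ Set.univ V ∧
    (∀ (a : ℝ) (x : X), 0 ≤ a → V (a • x) = a ^ 2 * V x) ∧
    (∀ x, V x = 0 ↔ x = 0) ∧
    Continuous V ∧
    (∀ x y : X, Real.sqrt (V (x + y)) ≤ Real.sqrt (V x) + Real.sqrt (V y)) ∧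
    (∀ (a : ℝ) (x : X), Real.sqrt (V (a • x)) = |a| * Real.sqrt (V x)) :=
  stmt6_general S K μ hμ hdecay V hVdef
end

section
/- Let X be a Banach space and {T_σ} a switched evolution family with ‖T_σ(t)‖ ≤ K e^{−μt} uniformly in σ. Let V(x) = sup_σ ∫₀^∞ ‖T_σ(t)x‖² dt. Then for every mode j ∈ Q, every x ∈ X and every t > 0, V(T_j(t)x) − V(x) ≤ −∫₀^t ‖T_j(τ)x‖² dτ; consequently liminf_{t↓0} (V(T_j(t)x) − V(x))/t ≤ −‖x‖². -/
open MeasureTheory Real Filter Set Topology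

/-- For the Lyapunov function `V(x) = sup_σ ∫₀^∞ ‖T_σ(t)x‖² dt` of a globally uniformly
exponentially stable switched system, along each mode `j` one has
`V(T_j(t)x) − V(x) ≤ −∫₀^t ‖T_j(τ)x‖² dτ`, and consequently
`liminf_{t↓0} (V(T_j(t)x) − V(x))/t ≤ −‖x‖²` (the latter rendered equivalently via
"frequently" quantifiers, which also covers the value `−∞`). -/
theorem stmt8 {X : Type*} [NormedAddCommGroup X] [NormedSpace ℝ X] [CompleteSpace X]
    {Q : Type*} (S : SwitchedSystem Q X)
    (K μ : ℝ) (hK : 1 ≤ K) (hμ : 0 < μ)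
    (hdecay : ∀ (σ : S.Sig) (t : ℝ), 0 ≤ t → ‖S.T σ t‖ ≤ K * Real.exp (-μ * t))
    (V : X → ℝ)
    (hVdef : ∀ x, V x = ⨆ σ : S.Sig, ∫ t in Set.Ioi (0:ℝ), ‖S.T σ t x‖ ^ 2) :
    ∀ (j : Q) (x : X),
      (∀ t : ℝ, 0 < t →
        V ((S.mode j).T t x) - V x ≤ - ∫ τ in (0:ℝ)..t, ‖(S.mode j).T τ x‖ ^ 2) ∧
      (∀ ε > (0:ℝ), ∃ᶠ t in 𝓝[>] (0:ℝ),
        (V ((S.mode j).T t x) - V x) / t < -‖x‖ ^ 2 + ε) := by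
  intro j x
  haveI : Nonempty S.Sig := ⟨S.const j⟩
  -- continuity facts
  have hcont : ∀ (σ : S.Sig) (y : X),
      ContinuousOn (fun τ => ‖S.T σ τ y‖ ^ 2) (Set.Ici 0) := fun σ y =>
    ((S.strong_cont σ y).norm).pow 2
  have hcontj : ContinuousOn (fun τ => ‖(S.mode j).T τ x‖ ^ 2) (Set.Ici 0) :=
    (((S.mode j).strong_cont x).norm).pow 2
  -- pointwise bound
  have hptbd : ∀ (σ : S.Sig) (y : X) (τ : ℝ), 0 ≤ τ →
      ‖S.T σ τ y‖ ^ 2 ≤ (K * ‖y‖) ^ 2 * Real.exp (-(2 * μ) * τ) := by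
    intro σ y τ hτ
    have h1 : ‖S.T σ τ y‖ ≤ (K * Real.exp (-μ * τ)) * ‖y‖ :=
      le_trans ((S.T σ τ).le_opNorm y)
        (mul_le_mul_of_nonneg_right (hdecay σ τ hτ) (norm_nonneg y))
    have h2 : 0 ≤ ‖S.T σ τ y‖ := norm_nonneg _
    have h3 : ‖S.T σ τ y‖ ^ 2 ≤ ((K * Real.exp (-μ * τ)) * ‖y‖) ^ 2 :=
      pow_le_pow_left₀ h2 h1 2
    have h4 : Real.exp (-μ * τ) ^ 2 = Real.exp (-(2 * μ) * τ) := by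
      rw [sq, ← Real.exp_add]; ring_nf
    calc ‖S.T σ τ y‖ ^ 2 ≤ ((K * Real.exp (-μ * τ)) * ‖y‖) ^ 2 := h3
      _ = (K * ‖y‖) ^ 2 * Real.exp (-μ * τ) ^ 2 := by ring
      _ = (K * ‖y‖) ^ 2 * Real.exp (-(2 * μ) * τ) := by rw [h4]
  -- integrability of the dominating function
  have hgInt : ∀ y : X, IntegrableOn
      (fun τ => (K * ‖y‖) ^ 2 * Real.exp (-(2 * μ) * τ)) (Set.Ioi (0:ℝ)) := by
    intro y
    exact (exp_neg_integrableOn_Ioi 0 (by positivity)).const_mul _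
  -- integrability
  have hInt : ∀ (σ : S.Sig) (y : X),
      IntegrableOn (fun τ => ‖S.T σ τ y‖ ^ 2) (Set.Ioi (0:ℝ)) := by
    intro σ y
    refine Integrable.mono' (hgInt y)
      (((hcont σ y).mono Set.Ioi_subset_Ici_self).aestronglyMeasurable measurableSet_Ioi) ?_
    filter_upwards [ae_restrict_mem measurableSet_Ioi] with τ hτ
    rw [Real.norm_eq_abs, abs_of_nonneg (by positivity)]
    exact hptbd σ y τ (le_of_lt hτ)
  -- bounded above
  have hBdd : ∀ y : X, BddAbove
      (Set.range fun σ : S.Sig => ∫ τ in Set.Ioi (0:ℝ), ‖S.T σ τ y‖ ^ 2) := by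
    intro y
    refine ⟨∫ τ in Set.Ioi (0:ℝ), (K * ‖y‖) ^ 2 * Real.exp (-(2 * μ) * τ), ?_⟩
    rintro _ ⟨σ, rfl⟩
    exact setIntegral_mono_on (hInt σ y) (hgInt y) measurableSet_Ioi
      (fun τ hτ => hptbd σ y τ (le_of_lt hτ))
  -- part 1
  have part1 : ∀ t : ℝ, 0 < t →
      V ((S.mode j).T t x) - V x ≤ - ∫ τ in (0:ℝ)..t, ‖(S.mode j).T τ x‖ ^ 2 := by
    intro t ht
    set y := (S.mode j).T t x with hy
    set I : ℝ := ∫ τ in (0:ℝ)..t, ‖(S.mode j).T τ x‖ ^ 2 with hI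
    have key : ∀ σ : S.Sig, (∫ τ in Set.Ioi (0:ℝ), ‖S.T σ τ y‖ ^ 2) + I ≤ V x := by
      intro σ
      obtain ⟨σ', hσ'1, hσ'2⟩ := S.prepend j σ t ht.le
      -- split the integral for σ'
      have hsplit : (∫ τ in Set.Ioi (0:ℝ), ‖S.T σ' τ x‖ ^ 2)
          = (∫ τ in Set.Ioc (0:ℝ) t, ‖S.T σ' τ x‖ ^ 2)
            + ∫ τ in Set.Ioi t, ‖S.T σ' τ x‖ ^ 2 := by
        rw [← Set.Ioc_union_Ioi_eq_Ioi ht.le]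
        exact setIntegral_union (Set.Ioc_disjoint_Ioi le_rfl) measurableSet_Ioi
          ((hInt σ' x).mono_set Set.Ioc_subset_Ioi_self)
          ((hInt σ' x).mono_set (Set.Ioi_subset_Ioi ht.le))
      have hIoc : (∫ τ in Set.Ioc (0:ℝ) t, ‖S.T σ' τ x‖ ^ 2) = I := by
        rw [hI, intervalIntegral.integral_of_le ht.le]
        refine setIntegral_congr_fun measurableSet_Ioc ?_
        intro τ hτ
        simp only
        rw [hσ'1 τ (le_of_lt hτ.1) hτ.2]
      have hIoi : (∫ τ in Set.Ioi t, ‖S.T σ' τ x‖ ^ 2)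
          = ∫ τ in Set.Ioi (0:ℝ), ‖S.T σ τ y‖ ^ 2 := by
        have hmp := (measurePreserving_add_right volume t).setIntegral_preimage_emb
          (measurableEmbedding_addRight t)
          (fun τ => ‖S.T σ' τ x‖ ^ 2) (Set.Ioi t)
        have hpre : (fun τ : ℝ => τ + t) ⁻¹' Set.Ioi t = Set.Ioi 0 := by
          ext τ; simp
        rw [hpre] at hmp
        rw [← hmp]
        refine setIntegral_congr_fun measurableSet_Ioi ?_
        intro τ hτ
        simp only
        rw [hσ'2 τ (le_of_lt hτ)]
        rfl
      have hle : (∫ τ in Set.Ioi (0:ℝ), ‖S.T σ' τ x‖ ^ 2) ≤ V x := by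
        rw [hVdef x]; exact le_ciSup (hBdd x) σ'
      rw [hsplit, hIoc, hIoi] at hle
      linarith
    have : V y ≤ V x - I := by
      rw [hVdef y]
      exact ciSup_le fun σ => by linarith [key σ]
    linarith
  refine ⟨part1, ?_⟩
  intro ε hε
  -- continuity at 0 of τ ↦ ‖T_j(τ)x‖²
  have h0 : ContinuousWithinAt (fun τ => ‖(S.mode j).T τ x‖ ^ 2) (Set.Ici 0) 0 :=
    hcontj 0 Set.self_mem_Ici
  have hval : ‖(S.mode j).T (0:ℝ) x‖ ^ 2 = ‖x‖ ^ 2 := by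
    rw [(S.mode j).map_zero]; rfl
  have hev : ∀ᶠ τ in 𝓝[Set.Ici 0] (0:ℝ), ‖x‖ ^ 2 - ε / 2 < ‖(S.mode j).T τ x‖ ^ 2 := by
    have : Set.Ioi (‖x‖ ^ 2 - ε / 2) ∈ 𝓝 (‖(S.mode j).T (0:ℝ) x‖ ^ 2) := by
      rw [hval]; exact Ioi_mem_nhds (by linarith)
    exact h0.eventually this
  rw [eventually_nhdsWithin_iff] at hev
  obtain ⟨u, hu, hu0⟩ := Metric.eventually_nhds_iff.mp hev
  set δ : ℝ := u / 2 with hδdef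
  have hδ : 0 < δ := by positivity
  have hbound : ∀ τ : ℝ, 0 ≤ τ → τ ≤ δ → ‖x‖ ^ 2 - ε / 2 < ‖(S.mode j).T τ x‖ ^ 2 := by
    intro τ hτ0 hτδ
    refine hu0 ?_ hτ0
    rw [Real.dist_eq, sub_zero, abs_of_nonneg hτ0]
    linarith
  have hfinal : ∀ᶠ t in 𝓝[>] (0:ℝ),
      (V ((S.mode j).T t x) - V x) / t < -‖x‖ ^ 2 + ε := by
    filter_upwards [Ioc_mem_nhdsGT hδ] with t ht
    obtain ⟨ht0, htδ⟩ := ht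
    have hii : IntervalIntegrable (fun τ => ‖(S.mode j).T τ x‖ ^ 2) volume 0 t := by
      apply ContinuousOn.intervalIntegrable
      refine hcontj.mono ?_
      rw [Set.uIcc_of_le ht0.le]
      exact Set.Icc_subset_Ici_self
    have hlow : t * (‖x‖ ^ 2 - ε / 2) ≤ ∫ τ in (0:ℝ)..t, ‖(S.mode j).T τ x‖ ^ 2 := by
      have := intervalIntegral.integral_mono_on (μ := volume) ht0.le
        intervalIntegrable_const hii
        (fun τ hτ => (hbound τ hτ.1 (le_trans hτ.2 htδ)).le)
      simp only [intervalIntegral.integral_const, smul_eq_mul, sub_zero] at this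
      linarith
    have h1 := part1 t ht0
    have h2 : (V ((S.mode j).T t x) - V x) / t
        ≤ (- ∫ τ in (0:ℝ)..t, ‖(S.mode j).T τ x‖ ^ 2) / t :=
      (div_le_div_iff_of_pos_right ht0).mpr h1
    have h3 : (- ∫ τ in (0:ℝ)..t, ‖(S.mode j).T τ x‖ ^ 2) / t ≤ -(‖x‖ ^ 2 - ε / 2) := by
      rw [div_le_iff₀ ht0]
      nlinarith
    calc (V ((S.mode j).T t x) - V x) / t ≤ -(‖x‖ ^ 2 - ε / 2) := h2.trans h3
      _ < -‖x‖ ^ 2 + ε := by linarith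
  exact hfinal.frequently
end
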